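/- arXiv:2512.03515 — 7 statements merged into one kernel-verified Lean document; each statement's English description precedes it below -/
import Mathlib

section
/- Let E be a real inner product space, F a real normed vector space, and A : E → F a continuous linear map. Let U and V be linear subspaces of E and λ₁ > λ₂ real numbers such that ‖A u‖ ≤ (exp λ₂)·‖u‖ for every u ∈ U and ‖A v‖ ≥ (exp λ₁)·‖v‖ for every v ∈ V. Then for every nonzero u ∈ U and every nonzero v ∈ V one has ∠(u, v) ≥ (exp λ₁ − exp λ₂)/‖A‖. -/
/-!
Normalize `u` and `v` to unit vectors `û`, `v̂`. The gap between the expansion of `A` on `V` and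
on `U` gives `e^{λ₁} − e^{λ₂} ≤ ‖A v̂‖ − ‖A û‖ ≤ ‖A‖ ‖v̂ − û‖`, and for unit vectors the chord
`‖v̂ − û‖` is at most the arc `∠(û, v̂)` since `1 − cos θ ≤ θ² / 2`.
-/

open InnerProductGeometry

theorem norm_inv_norm_smul_self {E : Type*} [NormedAddCommGroup E] [NormedSpace ℝ E] {x : E}
    (hx : x ≠ 0) : ‖‖x‖⁻¹ • x‖ = 1 := by
  rw [norm_smul, norm_inv, norm_norm, inv_mul_cancel₀ (norm_ne_zero_iff.2 hx)]

section

variable {E : Type*} [NormedAddCommGroup E] [InnerProductSpace ℝ E]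

theorem InnerProductGeometry.norm_sub_le_angle_of_norm_eq_one {x y : E} (hx : ‖x‖ = 1)
    (hy : ‖y‖ = 1) : ‖x - y‖ ≤ angle x y := by
  rw [← pow_le_pow_iff_left₀ (norm_nonneg _) (angle_nonneg x y) two_ne_zero, sq, sq,
    norm_sub_sq_eq_norm_sq_add_norm_sq_sub_two_mul_norm_mul_norm_mul_cos_angle, hx, hy]
  nlinarith [Real.one_sub_sq_div_two_le_cos (x := angle x y)]

theorem InnerProductGeometry.norm_inv_smul_sub_inv_smul_le_angle {x y : E} (hx : x ≠ 0)
    (hy : y ≠ 0) : ‖‖x‖⁻¹ • x - ‖y‖⁻¹ • y‖ ≤ angle x y := by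
  calc ‖‖x‖⁻¹ • x - ‖y‖⁻¹ • y‖ ≤ angle (‖x‖⁻¹ • x) (‖y‖⁻¹ • y) :=
        norm_sub_le_angle_of_norm_eq_one (norm_inv_norm_smul_self hx)
          (norm_inv_norm_smul_self hy)
    _ = angle x y := by
      rw [angle_smul_left_of_pos _ _ (inv_pos.2 (norm_pos_iff.2 hx)),
        angle_smul_right_of_pos _ _ (inv_pos.2 (norm_pos_iff.2 hy))]

end

theorem ContinuousLinearMap.norm_apply_sub_norm_apply_le {𝕜 E F : Type*}
    [NontriviallyNormedField 𝕜] [SeminormedAddCommGroup E] [NormedSpace 𝕜 E]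
    [SeminormedAddCommGroup F] [NormedSpace 𝕜 F] (A : E →L[𝕜] F) (x y : E) :
    ‖A x‖ - ‖A y‖ ≤ ‖A‖ * ‖x - y‖ :=
  calc ‖A x‖ - ‖A y‖ ≤ ‖A x - A y‖ := norm_sub_norm_le _ _
    _ = ‖A (x - y)‖ := by rw [map_sub]
    _ ≤ ‖A‖ * ‖x - y‖ := A.le_opNorm _

theorem stmt_1_general {E F : Type*} [NormedAddCommGroup E] [InnerProductSpace ℝ E]
    [NormedAddCommGroup F] [NormedSpace ℝ F]
    (A : E →L[ℝ] F) (U V : Submodule ℝ E) (lam₁ lam₂ : ℝ)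
    (hU : ∀ u ∈ U, ‖A u‖ ≤ Real.exp lam₂ * ‖u‖)
    (hV : ∀ v ∈ V, Real.exp lam₁ * ‖v‖ ≤ ‖A v‖) :
    ∀ u ∈ U, u ≠ 0 → ∀ v ∈ V, v ≠ 0 →
      (Real.exp lam₁ - Real.exp lam₂) / ‖A‖ ≤ InnerProductGeometry.angle u v := by
  intro u hu hu0 v hv hv0
  have hAu : ‖A (‖u‖⁻¹ • u)‖ ≤ Real.exp lam₂ := by
    simpa only [norm_inv_norm_smul_self hu0, mul_one] using hU _ (U.smul_mem ‖u‖⁻¹ hu)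
  have hAv : Real.exp lam₁ ≤ ‖A (‖v‖⁻¹ • v)‖ := by
    simpa only [norm_inv_norm_smul_self hv0, mul_one] using hV _ (V.smul_mem ‖v‖⁻¹ hv)
  refine div_le_of_le_mul₀ (norm_nonneg A) (angle_nonneg u v) ?_
  calc Real.exp lam₁ - Real.exp lam₂ ≤ ‖A (‖v‖⁻¹ • v)‖ - ‖A (‖u‖⁻¹ • u)‖ := by linarith
    _ ≤ ‖A‖ * ‖‖v‖⁻¹ • v - ‖u‖⁻¹ • u‖ := A.norm_apply_sub_norm_apply_le _ _
    _ ≤ ‖A‖ * angle v u := by gcongr; exact norm_inv_smul_sub_inv_smul_le_angle hv0 hu0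
    _ = angle u v * ‖A‖ := by rw [angle_comm, mul_comm]

/-- (Linear-algebra content of the paper's angle lemma.)
If `‖A u‖ ≤ e^{λ₂}‖u‖` on the subspace `U` and `‖A v‖ ≥ e^{λ₁}‖v‖` on the subspace `V`,
with `λ₁ > λ₂`, then the angle between any nonzero `u ∈ U` and `v ∈ V` is at least
`(e^{λ₁} − e^{λ₂})/‖A‖`. -/
theorem stmt_1 {E F : Type*} [NormedAddCommGroup E] [InnerProductSpace ℝ E]
    [NormedAddCommGroup F] [NormedSpace ℝ F]
    (A : E →L[ℝ] F) (U V : Submodule ℝ E) (lam₁ lam₂ : ℝ) (hlam : lam₂ < lam₁)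
    (hU : ∀ u ∈ U, ‖A u‖ ≤ Real.exp lam₂ * ‖u‖)
    (hV : ∀ v ∈ V, Real.exp lam₁ * ‖v‖ ≤ ‖A v‖) :
    ∀ u ∈ U, u ≠ 0 → ∀ v ∈ V, v ≠ 0 →
      (Real.exp lam₁ - Real.exp lam₂) / ‖A‖ ≤ InnerProductGeometry.angle u v :=
  stmt_1_general A U V lam₁ lam₂ hU hV
end

section
/- Let E be a real normed vector space and σ : [−1,1] → E a C² curve. Set M := sup_{t ∈ [−1,1]} ‖σ′(t)‖ and assume ‖σ″(t)‖ ≤ M/6 for every t ∈ [−1,1]. Then M ≤ 2·‖σ′(t)‖ for every t ∈ [−1,1]. -/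
/-- For a C² curve `σ : [−1,1] → E` with `M = sup ‖σ′‖` and
`‖σ″(t)‖ ≤ M/6` on `[−1,1]`, one has `M ≤ 2‖σ′(t)‖` for every `t ∈ [−1,1]`. -/
theorem stmt_2 {E : Type*} [NormedAddCommGroup E] [NormedSpace ℝ E]
    (σ σ' σ'' : ℝ → E) (M : ℝ)
    (hM : M = ⨆ t : Set.Icc (-1:ℝ) 1, ‖σ' t.1‖)
    (hd1 : ∀ t ∈ Set.Icc (-1:ℝ) 1, HasDerivWithinAt σ (σ' t) (Set.Icc (-1:ℝ) 1) t)
    (hd2 : ∀ t ∈ Set.Icc (-1:ℝ) 1, HasDerivWithinAt σ' (σ'' t) (Set.Icc (-1:ℝ) 1) t)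
    (hbd : ∀ t ∈ Set.Icc (-1:ℝ) 1, ‖σ'' t‖ ≤ M / 6) :
    ∀ t ∈ Set.Icc (-1:ℝ) 1, M ≤ 2 * ‖σ' t‖ := by
  intro t ht
  have hconv : Convex ℝ (Set.Icc (-1:ℝ) 1) := convex_Icc _ _
  haveI : Nonempty (Set.Icc (-1:ℝ) 1) := ⟨⟨0, by norm_num⟩⟩
  have hlip : ∀ s ∈ Set.Icc (-1:ℝ) 1, ‖σ' s - σ' t‖ ≤ (M/6) * ‖s - t‖ :=
    fun s hs => hconv.norm_image_sub_le_of_norm_hasDerivWithin_le hd2 hbd ht hs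
  have hbdd : BddAbove (Set.range fun u : Set.Icc (-1:ℝ) 1 => ‖σ' u.1‖) := by
    by_contra h
    have hM0 : M = 0 := by rw [hM]; exact Real.iSup_of_not_bddAbove h
    refine h ⟨‖σ' t‖, ?_⟩
    rintro x ⟨u, rfl⟩
    have h1 := hlip u.1 u.2
    rw [hM0] at h1
    simp only [zero_div, zero_mul] at h1
    have h2 : σ' u.1 = σ' t := by
      have := le_antisymm h1 (norm_nonneg _)
      rwa [norm_eq_zero, sub_eq_zero] at this
    simp [h2]
  have hMub : ∀ s ∈ Set.Icc (-1:ℝ) 1, ‖σ' s‖ ≤ M := by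
    intro s hs
    rw [hM]
    exact le_ciSup hbdd ⟨s, hs⟩
  have hMnn : 0 ≤ M := le_trans (norm_nonneg _) (hMub t ht)
  have key : M ≤ ‖σ' t‖ + M/3 := by
    rw [hM]
    apply ciSup_le
    rintro ⟨s, hs⟩
    have h1 := hlip s hs
    have h2 : ‖s - t‖ ≤ 2 := by
      rw [Real.norm_eq_abs, abs_sub_le_iff]
      obtain ⟨hs1, hs2⟩ := hs
      obtain ⟨ht1, ht2⟩ := ht
      constructor <;> linarith
    have h3 : ‖σ' s‖ ≤ ‖σ' t‖ + ‖σ' s - σ' t‖ := by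
      calc ‖σ' s‖ = ‖σ' t + (σ' s - σ' t)‖ := by rw [add_sub_cancel]
        _ ≤ ‖σ' t‖ + ‖σ' s - σ' t‖ := norm_add_le _ _
    have h4 : (M/6) * ‖s - t‖ ≤ M/3 := by nlinarith
    linarith
  linarith [norm_nonneg (σ' t)]
end

section
/- Let E be a real inner product space and σ : [−1,1] → E a C² curve. Set M := sup_{t ∈ [−1,1]} ‖σ′(t)‖, assume M > 0 and ‖σ″(t)‖ ≤ M/6 for every t ∈ [−1,1]. Then for all s, t ∈ [−1,1], sin ∠(σ′(s), σ′(t)) < 1/2. -/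
/-!
The bound `‖σ″‖ ≤ M/6` on an interval of length 2 moves `σ′` by at most `M/3`. Hence every
`‖σ′(t)‖` lies within `M/3` of the supremum `M`, so all tangent vectors have norm at least
`2M/3` while any two of them are at most `M/3` apart. By the law of cosines their angle then has
cosine at least `7/8`, so its sine is at most `√15/8 < 1/2`.
-/

open InnerProductGeometry Set

section Geometry

variable {E : Type*} [NormedAddCommGroup E] [InnerProductSpace ℝ E]

theorem norm_mul_norm_sub_le_norm_mul_norm_mul_cos_angle (u v : E) :
    ‖u‖ * ‖v‖ - ‖u - v‖ ^ 2 / 2 ≤ ‖u‖ * ‖v‖ * Real.cos (angle u v) := by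
  have := norm_sub_sq_eq_norm_sq_add_norm_sq_sub_two_mul_norm_mul_norm_mul_cos_angle u v
  nlinarith [sq_nonneg (‖u‖ - ‖v‖)]

theorem seven_div_eight_le_cos_angle_of_norm_sub_le {u v : E} {m : ℝ} (hm : 0 < m)
    (hu : 2 * m ≤ ‖u‖) (hv : 2 * m ≤ ‖v‖) (huv : ‖u - v‖ ≤ m) :
    7 / 8 ≤ Real.cos (angle u v) := by
  have hprod : 4 * m ^ 2 ≤ ‖u‖ * ‖v‖ := by nlinarith
  have hdist : ‖u - v‖ ^ 2 ≤ m ^ 2 := pow_le_pow_left₀ (norm_nonneg _) huv 2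
  have hcos := norm_mul_norm_sub_le_norm_mul_norm_mul_cos_angle u v
  rw [← mul_le_mul_iff_of_pos_left (show 0 < ‖u‖ * ‖v‖ by nlinarith)]
  nlinarith

end Geometry

theorem Real.sin_lt_one_div_two_of_seven_div_eight_le_cos {θ : ℝ} (h : 7 / 8 ≤ Real.cos θ) :
    Real.sin θ < 1 / 2 := by
  have hsq : Real.sin θ ^ 2 < (1 / 2) ^ 2 := by nlinarith [Real.sin_sq_add_cos_sq θ]
  exact lt_of_pow_lt_pow_left₀ 2 (by norm_num) hsq

theorem norm_image_sub_le_of_norm_hasDerivWithin_le_Icc {F : Type*} [NormedAddCommGroup F]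
    [NormedSpace ℝ F] {f f' : ℝ → F} {a b C : ℝ}
    (hf : ∀ x ∈ Icc a b, HasDerivWithinAt f (f' x) (Icc a b) x)
    (bound : ∀ x ∈ Icc a b, ‖f' x‖ ≤ C) {x y : ℝ} (hx : x ∈ Icc a b) (hy : y ∈ Icc a b) :
    ‖f y - f x‖ ≤ C * (b - a) := by
  have hC : 0 ≤ C := (norm_nonneg _).trans (bound x hx)
  have hyx : ‖y - x‖ ≤ b - a := by
    rw [Real.norm_eq_abs, abs_sub_le_iff]
    constructor <;> linarith [hx.1, hx.2, hy.1, hy.2]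
  calc ‖f y - f x‖ ≤ C * ‖y - x‖ :=
        (convex_Icc a b).norm_image_sub_le_of_norm_hasDerivWithin_le hf bound hx hy
    _ ≤ C * (b - a) := mul_le_mul_of_nonneg_left hyx hC

theorem iSup_norm_le_norm_add_of_norm_sub_le {F : Type*} [SeminormedAddCommGroup F]
    {s : Set ℝ} [Nonempty s] {g : ℝ → F} {δ : ℝ}
    (hg : ∀ x ∈ s, ∀ y ∈ s, ‖g y - g x‖ ≤ δ) {x : ℝ} (hx : x ∈ s) :
    ⨆ y : s, ‖g y.1‖ ≤ ‖g x‖ + δ :=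
  ciSup_le fun y => calc
    ‖g y.1‖ = ‖g x + (g y.1 - g x)‖ := by rw [add_sub_cancel]
    _ ≤ ‖g x‖ + ‖g y.1 - g x‖ := norm_add_le _ _
    _ ≤ ‖g x‖ + δ := by gcongr; exact hg x hx y.1 y.2

theorem stmt_3_general {E : Type*} [NormedAddCommGroup E] [InnerProductSpace ℝ E]
    (σ' σ'' : ℝ → E) (M : ℝ)
    (hM : M = ⨆ t : Set.Icc (-1:ℝ) 1, ‖σ' t.1‖) (hMpos : 0 < M)
    (hd2 : ∀ t ∈ Set.Icc (-1:ℝ) 1, HasDerivWithinAt σ' (σ'' t) (Set.Icc (-1:ℝ) 1) t)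
    (hbd : ∀ t ∈ Set.Icc (-1:ℝ) 1, ‖σ'' t‖ ≤ M / 6) :
    ∀ s ∈ Set.Icc (-1:ℝ) 1, ∀ t ∈ Set.Icc (-1:ℝ) 1,
      Real.sin (InnerProductGeometry.angle (σ' s) (σ' t)) < 1 / 2 := by
  intro s hs t ht
  have hvar : ∀ x ∈ Icc (-1:ℝ) 1, ∀ y ∈ Icc (-1:ℝ) 1, ‖σ' y - σ' x‖ ≤ M / 3 :=
    fun x hx y hy => by
      have := norm_image_sub_le_of_norm_hasDerivWithin_le_Icc hd2 hbd hx hy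
      linarith
  have : Nonempty (Icc (-1:ℝ) 1) := ⟨⟨0, by norm_num, by norm_num⟩⟩
  have hlow : ∀ x ∈ Icc (-1:ℝ) 1, 2 * (M / 3) ≤ ‖σ' x‖ := fun x hx => by
    have := iSup_norm_le_norm_add_of_norm_sub_le hvar hx
    linarith
  apply Real.sin_lt_one_div_two_of_seven_div_eight_le_cos
  exact seven_div_eight_le_cos_angle_of_norm_sub_le (by positivity) (hlow s hs) (hlow t ht)
    (hvar t ht s hs)

/-- For a C² curve `σ : [−1,1] → E` into a real inner product space with
`M = sup ‖σ′‖ > 0` and `‖σ″(t)‖ ≤ M/6` on `[−1,1]`, the tangent vectors satisfy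
`sin ∠(σ′(s), σ′(t)) < 1/2` for all `s, t ∈ [−1,1]`. -/
theorem stmt_3 {E : Type*} [NormedAddCommGroup E] [InnerProductSpace ℝ E]
    (σ σ' σ'' : ℝ → E) (M : ℝ)
    (hM : M = ⨆ t : Set.Icc (-1:ℝ) 1, ‖σ' t.1‖) (hMpos : 0 < M)
    (hd1 : ∀ t ∈ Set.Icc (-1:ℝ) 1, HasDerivWithinAt σ (σ' t) (Set.Icc (-1:ℝ) 1) t)
    (hd2 : ∀ t ∈ Set.Icc (-1:ℝ) 1, HasDerivWithinAt σ' (σ'' t) (Set.Icc (-1:ℝ) 1) t)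
    (hbd : ∀ t ∈ Set.Icc (-1:ℝ) 1, ‖σ'' t‖ ≤ M / 6) :
    ∀ s ∈ Set.Icc (-1:ℝ) 1, ∀ t ∈ Set.Icc (-1:ℝ) 1,
      Real.sin (InnerProductGeometry.angle (σ' s) (σ' t)) < 1 / 2 :=
  stmt_3_general σ' σ'' M hM hMpos hd2 hbd
end

section
/- Let E be a real inner product space and σ : [−1,1] → E a C² curve. Set M := sup_{t ∈ [−1,1]} ‖σ′(t)‖, assume M > 0 and ‖σ″(t)‖ ≤ M/6 for every t ∈ [−1,1]. Then for all s, t ∈ [−1,1], sin ∠(σ′(s), σ′(t)) ≤ |t − s|/4. -/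
/-!
Writing `I = [-1, 1]`, the bound on `σ″` makes `σ′` `(M/6)`-Lipschitz on `I`, so `σ′` varies
by at most `M/3` over `I`; comparing with `M = sup ‖σ′‖` gives `‖σ′‖ ≥ 2M/3` on `I`. By the law
of sines, `sin ∠(u, v) · ‖v‖ ≤ ‖v − u‖`, hence
`sin ∠(σ′(s), σ′(t)) ≤ (M/6)|t − s| / (2M/3) = |t − s|/4`.
-/

open InnerProductGeometry Set

namespace InnerProductGeometry

variable {V : Type*} [NormedAddCommGroup V] [InnerProductSpace ℝ V]

theorem sin_angle_mul_norm_le_norm_sub (x y : V) : Real.sin (angle x y) * ‖x‖ ≤ ‖x - y‖ := by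
  rw [sin_angle_mul_norm_eq_sin_angle_mul_norm]
  exact mul_le_of_le_one_left (norm_nonneg _) (Real.sin_le_one _)

end InnerProductGeometry

theorem ciSup_norm_le_norm_add {ι E : Type*} [Nonempty ι] [SeminormedAddCommGroup E]
    {f : ι → E} (i : ι) {L : ℝ} (h : ∀ j, ‖f j - f i‖ ≤ L) : ⨆ j, ‖f j‖ ≤ ‖f i‖ + L :=
  ciSup_le fun j => (norm_le_norm_add_norm_sub' (f j) (f i)).trans (by linarith [h j])

theorem abs_sub_le_two_of_mem_Icc {a b : ℝ} (ha : a ∈ Icc (-1 : ℝ) 1) (hb : b ∈ Icc (-1 : ℝ) 1) :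
    |b - a| ≤ 2 :=
  abs_le.2 ⟨by linarith [ha.2, hb.1], by linarith [ha.1, hb.2]⟩

theorem stmt_4_general {E : Type*} [NormedAddCommGroup E] [InnerProductSpace ℝ E]
    (σ' σ'' : ℝ → E) (M : ℝ)
    (hM : M = ⨆ t : Set.Icc (-1:ℝ) 1, ‖σ' t.1‖) (hMpos : 0 < M)
    (hd2 : ∀ t ∈ Set.Icc (-1:ℝ) 1, HasDerivWithinAt σ' (σ'' t) (Set.Icc (-1:ℝ) 1) t)
    (hbd : ∀ t ∈ Set.Icc (-1:ℝ) 1, ‖σ'' t‖ ≤ M / 6) :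
    ∀ s ∈ Set.Icc (-1:ℝ) 1, ∀ t ∈ Set.Icc (-1:ℝ) 1,
      Real.sin (InnerProductGeometry.angle (σ' s) (σ' t)) ≤ |t - s| / 4 := by
  intro s hs t ht
  have hlip : ∀ a ∈ Icc (-1 : ℝ) 1, ∀ b ∈ Icc (-1 : ℝ) 1, ‖σ' b - σ' a‖ ≤ M / 6 * |b - a| :=
    fun a ha b hb => by
      simpa [Real.norm_eq_abs] using
        (convex_Icc _ _).norm_image_sub_le_of_norm_hasDerivWithin_le hd2 hbd ha hb
  have hlow : 2 * M / 3 ≤ ‖σ' t‖ := by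
    have : Nonempty (Icc (-1 : ℝ) 1) := ⟨⟨0, by norm_num⟩⟩
    have hsup : M ≤ ‖σ' t‖ + M / 3 := hM ▸
      ciSup_norm_le_norm_add (f := fun b : Icc (-1 : ℝ) 1 => σ' b) ⟨t, ht⟩ fun b =>
        (hlip t ht b b.2).trans (by nlinarith [abs_sub_le_two_of_mem_Icc ht b.2])
    linarith
  have hsin : Real.sin (angle (σ' s) (σ' t)) * ‖σ' t‖ ≤ M / 6 * |t - s| := by
    rw [angle_comm]
    exact (sin_angle_mul_norm_le_norm_sub _ _).trans (hlip s hs t ht)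
  nlinarith [sin_angle_nonneg (σ' s) (σ' t)]

/-- For a C² curve `σ : [−1,1] → E` into a real inner product space with
`M = sup ‖σ′‖ > 0` and `‖σ″(t)‖ ≤ M/6` on `[−1,1]`, the tangent vectors satisfy
`sin ∠(σ′(s), σ′(t)) ≤ |t − s|/4` for all `s, t ∈ [−1,1]`. -/
theorem stmt_4 {E : Type*} [NormedAddCommGroup E] [InnerProductSpace ℝ E]
    (σ σ' σ'' : ℝ → E) (M : ℝ)
    (hM : M = ⨆ t : Set.Icc (-1:ℝ) 1, ‖σ' t.1‖) (hMpos : 0 < M)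
    (hd1 : ∀ t ∈ Set.Icc (-1:ℝ) 1, HasDerivWithinAt σ (σ' t) (Set.Icc (-1:ℝ) 1) t)
    (hd2 : ∀ t ∈ Set.Icc (-1:ℝ) 1, HasDerivWithinAt σ' (σ'' t) (Set.Icc (-1:ℝ) 1) t)
    (hbd : ∀ t ∈ Set.Icc (-1:ℝ) 1, ‖σ'' t‖ ≤ M / 6) :
    ∀ s ∈ Set.Icc (-1:ℝ) 1, ∀ t ∈ Set.Icc (-1:ℝ) 1,
      Real.sin (InnerProductGeometry.angle (σ' s) (σ' t)) ≤ |t - s| / 4 :=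
  stmt_4_general σ' σ'' M hM hMpos hd2 hbd
end

section
/- Let E be a real normed vector space, r ≥ 2 an integer and ε > 0. Let σ : [−1,1] → E be a C^r curve that is bounded but not strongly ε-bounded, i.e. sup_{2 ≤ s ≤ r} sup_{t ∈ [−1,1]} ‖σ^{(s)}(t)‖ ≤ (1/6)·M and M > ε, where M := sup_{t ∈ [−1,1]} ‖σ′(t)‖. Set t₁ := ε/M − 1 and t₂ := 1 − ε/M, and let θ⁻ : [−1,1] → [−1, t₁] and θ⁺ : [−1,1] → [t₂, 1] be the increasing affine bijections. Then −1 < t₁ < 0 < t₂ < 1 and both σ∘θ⁻ and σ∘θ⁺ are strongly ε-bounded. -/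
open Set

/-! Since `‖σ''‖ ≤ M/6` on an interval of length 2, the norm `‖σ'‖` oscillates by at most `M/3`,
so `‖σ'‖ ≥ 2M/3` everywhere. An affine reparametrization of slope `c` multiplies the `s`-th
derivative by `c^s`. For `c = ε/(2M) < 1/2` the new first derivative is at most `cM ≤ ε` while
its supremum stays at least `2cM/3`; as `c^s ≤ 2c/3` for `s ≥ 2`, the new higher derivatives,
bounded by `c^s M/6`, stay below one sixth of that supremum. -/

/-- `D` is a family of successive derivatives (up to order `r`) of the curve `D 0` on
`[−1,1]`: `D (k+1)` is the derivative of `D k` within `[−1,1]`, for every `k < r`. -/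
def DerivFamilyOn {E : Type*} [NormedAddCommGroup E] [NormedSpace ℝ E]
    (r : ℕ) (D : ℕ → ℝ → E) : Prop :=
  ∀ k < r, ∀ t ∈ Icc (-1:ℝ) 1, HasDerivWithinAt (D k) (D (k + 1) t) (Icc (-1:ℝ) 1) t

/-- The supremum `sup_{t ∈ [−1,1]} ‖D 1 (t)‖` of the norm of the first derivative. -/
noncomputable def supD1 {E : Type*} [NormedAddCommGroup E] [NormedSpace ℝ E]
    (D : ℕ → ℝ → E) : ℝ :=
  ⨆ t : Icc (-1:ℝ) 1, ‖D 1 t.1‖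

/-- The curve `D 0` is *bounded*: `sup_{2 ≤ s ≤ r} sup_{t ∈ [−1,1]} ‖D s (t)‖ ≤ (1/6)·sup ‖D 1‖`. -/
def BoundedFamily {E : Type*} [NormedAddCommGroup E] [NormedSpace ℝ E]
    (r : ℕ) (D : ℕ → ℝ → E) : Prop :=
  ∀ s, 2 ≤ s → s ≤ r → ∀ t ∈ Icc (-1:ℝ) 1, ‖D s t‖ ≤ (1 / 6) * supD1 D

/-- The curve `D 0` is *strongly ε-bounded*: it is bounded and `sup ‖D 1‖ ≤ ε`. -/
def StronglyBoundedFamily {E : Type*} [NormedAddCommGroup E] [NormedSpace ℝ E]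
    (r : ℕ) (ε : ℝ) (D : ℕ → ℝ → E) : Prop :=
  BoundedFamily r D ∧ ∀ t ∈ Icc (-1:ℝ) 1, ‖D 1 t‖ ≤ ε

/-- The family of successive derivatives of the reparametrized curve `t ↦ D 0 (c·t + d)`:
its `k`-th derivative is `c^k • D k (c·t + d)`. -/
noncomputable def affineReparam {E : Type*} [NormedAddCommGroup E] [NormedSpace ℝ E]
    (c d : ℝ) (D : ℕ → ℝ → E) : ℕ → ℝ → E :=
  fun k t => c ^ k • D k (c * t + d)

section

variable {E : Type*} [NormedAddCommGroup E] [NormedSpace ℝ E] {r : ℕ} {D : ℕ → ℝ → E}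

lemma supD1_nonneg : 0 ≤ supD1 D :=
  Real.iSup_nonneg fun _ => norm_nonneg _

lemma norm_le_supD1 (hD : DerivFamilyOn r D) (hr : 1 < r) {t : ℝ}
    (ht : t ∈ Icc (-1:ℝ) 1) : ‖D 1 t‖ ≤ supD1 D := by
  have hcont : ContinuousOn (D 1) (Icc (-1:ℝ) 1) := fun t ht =>
    (hD 1 hr t ht).continuousWithinAt
  obtain ⟨C, hC⟩ := isCompact_Icc.exists_bound_of_continuousOn hcont
  have hbdd : BddAbove (range fun t : Icc (-1:ℝ) 1 => ‖D 1 t.1‖) := by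
    refine ⟨C, ?_⟩
    rintro _ ⟨t, rfl⟩
    exact hC t.1 t.2
  exact le_ciSup hbdd (⟨t, ht⟩ : Icc (-1:ℝ) 1)

lemma two_thirds_mul_supD1_le_norm (hD : DerivFamilyOn r D)
    (hb : BoundedFamily r D) (hr : 2 ≤ r) {v : ℝ} (hv : v ∈ Icc (-1:ℝ) 1) :
    2 / 3 * supD1 D ≤ ‖D 1 v‖ := by
  have hM := supD1_nonneg (D := D)
  have hosc : ∀ u ∈ Icc (-1:ℝ) 1, ‖D 1 u‖ ≤ ‖D 1 v‖ + supD1 D / 3 := by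
    intro u hu
    have hlip := (convex_Icc (-1:ℝ) 1).norm_image_sub_le_of_norm_hasDerivWithin_le
      (fun x hx => hD 1 (by omega) x hx) (hb 2 le_rfl hr) hv hu
    have hdist : ‖u - v‖ ≤ 2 := by
      rw [Real.norm_eq_abs, abs_sub_le_iff]
      constructor <;> linarith [hu.1, hu.2, hv.1, hv.2]
    calc ‖D 1 u‖ ≤ ‖D 1 v‖ + ‖D 1 u - D 1 v‖ := norm_le_norm_add_norm_sub' _ _
      _ ≤ ‖D 1 v‖ + 1 / 6 * supD1 D * 2 := by gcongr; exact hlip.trans (by gcongr)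
      _ = ‖D 1 v‖ + supD1 D / 3 := by ring
  have hsup : supD1 D ≤ ‖D 1 v‖ + supD1 D / 3 := by
    have : Nonempty (Icc (-1:ℝ) 1) := ⟨⟨0, by norm_num⟩⟩
    exact ciSup_le fun u => hosc u.1 u.2
  linarith

lemma norm_affineReparam (c d : ℝ) (k : ℕ) (t : ℝ) :
    ‖affineReparam c d D k t‖ = |c| ^ k * ‖D k (c * t + d)‖ := by
  rw [affineReparam, norm_smul, norm_pow, Real.norm_eq_abs]

lemma mapsTo_affine_Icc {c d : ℝ} (hc : 0 ≤ c) (hleft : -1 ≤ d - c) (hright : d + c ≤ 1) :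
    MapsTo (fun t => c * t + d) (Icc (-1:ℝ) 1) (Icc (-1:ℝ) 1) := by
  rintro t ⟨ht₁, ht₂⟩
  constructor <;> nlinarith

variable {c d : ℝ}

lemma derivFamilyOn_affineReparam
    (hmaps : MapsTo (fun t => c * t + d) (Icc (-1:ℝ) 1) (Icc (-1:ℝ) 1))
    (hD : DerivFamilyOn r D) :
    DerivFamilyOn r (affineReparam c d D) := by
  intro k hk t ht
  have haff : HasDerivWithinAt (fun t => c * t + d) c (Icc (-1:ℝ) 1) t := by
    simpa using (((hasDerivAt_id t).const_mul c).add_const d).hasDerivWithinAt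
  have hcomp := ((hD k hk _ (hmaps ht)).scomp t haff hmaps).const_smul (c ^ k)
  rw [smul_smul, ← pow_succ] at hcomp
  exact hcomp

lemma boundedFamily_affineReparam
    (hmaps : MapsTo (fun t => c * t + d) (Icc (-1:ℝ) 1) (Icc (-1:ℝ) 1))
    (hD : DerivFamilyOn r D) (hb : BoundedFamily r D) (hr : 2 ≤ r) (hc : |c| ≤ 2 / 3) :
    BoundedFamily r (affineReparam c d D) := by
  intro s hs2 hsr t ht
  have hM := supD1_nonneg (D := D)
  have h0 : (0:ℝ) ∈ Icc (-1:ℝ) 1 := by norm_num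
  have hsup : |c| * (2 / 3 * supD1 D) ≤ supD1 (affineReparam c d D) := by
    have hd : d ∈ Icc (-1:ℝ) 1 := by simpa using hmaps h0
    calc |c| * (2 / 3 * supD1 D) ≤ |c| * ‖D 1 d‖ :=
          mul_le_mul_of_nonneg_left (two_thirds_mul_supD1_le_norm hD hb hr hd) (abs_nonneg c)
      _ = ‖affineReparam c d D 1 0‖ := by simp [norm_affineReparam]
      _ ≤ _ := norm_le_supD1 (derivFamilyOn_affineReparam hmaps hD) (by omega) h0
  have hpow : |c| ^ s ≤ |c| * (2 / 3) :=
    calc |c| ^ s ≤ |c| ^ 2 := pow_le_pow_of_le_one (abs_nonneg c) (by linarith) hs2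
      _ = |c| * |c| := sq _
      _ ≤ |c| * (2 / 3) := mul_le_mul_of_nonneg_left hc (abs_nonneg c)
  calc ‖affineReparam c d D s t‖ = |c| ^ s * ‖D s (c * t + d)‖ := norm_affineReparam c d s t
    _ ≤ |c| * (2 / 3) * (1 / 6 * supD1 D) :=
        mul_le_mul hpow (hb s hs2 hsr _ (hmaps ht)) (norm_nonneg _) (by positivity)
    _ = 1 / 6 * (|c| * (2 / 3 * supD1 D)) := by ring
    _ ≤ 1 / 6 * supD1 (affineReparam c d D) := by linarith

lemma stronglyBoundedFamily_affineReparam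
    (hmaps : MapsTo (fun t => c * t + d) (Icc (-1:ℝ) 1) (Icc (-1:ℝ) 1))
    (hD : DerivFamilyOn r D) (hb : BoundedFamily r D) (hr : 2 ≤ r) {ε : ℝ} (hc : |c| ≤ 2 / 3)
    (hcε : |c| * supD1 D ≤ ε) : StronglyBoundedFamily r ε (affineReparam c d D) := by
  refine ⟨boundedFamily_affineReparam hmaps hD hb hr hc, fun t ht => ?_⟩
  calc ‖affineReparam c d D 1 t‖ = |c| * ‖D 1 (c * t + d)‖ := by simp [norm_affineReparam]
    _ ≤ |c| * supD1 D :=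
        mul_le_mul_of_nonneg_left (norm_le_supD1 hD (by omega) (hmaps ht)) (abs_nonneg c)
    _ ≤ ε := hcε

end

theorem stmt_6_general {E : Type*} [NormedAddCommGroup E] [NormedSpace ℝ E]
    (r : ℕ) (hr : 2 ≤ r) (ε : ℝ) (hε : 0 < ε)
    (D : ℕ → ℝ → E)
    (hD : DerivFamilyOn r D) (hb : BoundedFamily r D) (hns : ε < supD1 D)
    (t₁ t₂ : ℝ) (ht₁ : t₁ = ε / supD1 D - 1) (ht₂ : t₂ = 1 - ε / supD1 D) :
    (-1 < t₁ ∧ t₁ < 0 ∧ 0 < t₂ ∧ t₂ < 1) ∧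
    (DerivFamilyOn r (affineReparam ((t₁ + 1) / 2) ((t₁ - 1) / 2) D) ∧
      StronglyBoundedFamily r ε (affineReparam ((t₁ + 1) / 2) ((t₁ - 1) / 2) D)) ∧
    (DerivFamilyOn r (affineReparam ((1 - t₂) / 2) ((1 + t₂) / 2) D) ∧
      StronglyBoundedFamily r ε (affineReparam ((1 - t₂) / 2) ((1 + t₂) / 2) D)) := by
  have hM : 0 < supD1 D := hε.trans hns
  have hq₀ : 0 < ε / supD1 D := div_pos hε hM
  have hq₁ : ε / supD1 D < 1 := (div_lt_one hM).2 hns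
  have hqM : ε / supD1 D / 2 * supD1 D ≤ ε := by
    rw [div_mul_eq_mul_div, div_mul_cancel₀ _ hM.ne']; linarith
  have hc₁ : (t₁ + 1) / 2 = ε / supD1 D / 2 := by rw [ht₁]; ring
  have hc₂ : (1 - t₂) / 2 = ε / supD1 D / 2 := by rw [ht₂]; ring
  have habs : |ε / supD1 D / 2| = ε / supD1 D / 2 := abs_of_pos (by positivity)
  have hmaps₁ := mapsTo_affine_Icc (c := (t₁ + 1) / 2) (d := (t₁ - 1) / 2)
    (by linarith) (by linarith) (by linarith)
  have hmaps₂ := mapsTo_affine_Icc (c := (1 - t₂) / 2) (d := (1 + t₂) / 2)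
    (by linarith) (by linarith) (by linarith)
  refine ⟨⟨by linarith, by linarith, by linarith, by linarith⟩,
    ⟨derivFamilyOn_affineReparam hmaps₁ hD,
      stronglyBoundedFamily_affineReparam hmaps₁ hD hb hr ?_ ?_⟩,
    ⟨derivFamilyOn_affineReparam hmaps₂ hD,
      stronglyBoundedFamily_affineReparam hmaps₂ hD hb hr ?_ ?_⟩⟩ <;>
    simp only [hc₁, hc₂, habs] <;> linarith

/-- (Second assertion of the paper's Lemma 2-Res, with the explicit
`t₁ = ε/M − 1`, `t₂ = 1 − ε/M`.) If the C^r curve `σ = D 0` is bounded but not strongly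
ε-bounded (`M := sup ‖σ′‖ > ε`), then `−1 < t₁ < 0 < t₂ < 1` and the affine
reparametrizations of `σ` onto `[−1,t₁]` and `[t₂,1]` are strongly ε-bounded. -/
theorem stmt_6 {E : Type*} [NormedAddCommGroup E] [NormedSpace ℝ E]
    (r : ℕ) (hr : 2 ≤ r) (ε : ℝ) (hε : 0 < ε)
    (σ : ℝ → E) (D : ℕ → ℝ → E) (hD0 : D 0 = σ)
    (hD : DerivFamilyOn r D) (hb : BoundedFamily r D) (hns : ε < supD1 D)
    (t₁ t₂ : ℝ) (ht₁ : t₁ = ε / supD1 D - 1) (ht₂ : t₂ = 1 - ε / supD1 D) :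
    (-1 < t₁ ∧ t₁ < 0 ∧ 0 < t₂ ∧ t₂ < 1) ∧
    (DerivFamilyOn r (affineReparam ((t₁ + 1) / 2) ((t₁ - 1) / 2) D) ∧
      StronglyBoundedFamily r ε (affineReparam ((t₁ + 1) / 2) ((t₁ - 1) / 2) D)) ∧
    (DerivFamilyOn r (affineReparam ((1 - t₂) / 2) ((1 + t₂) / 2) D) ∧
      StronglyBoundedFamily r ε (affineReparam ((1 - t₂) / 2) ((1 + t₂) / 2) D)) :=
  stmt_6_general r hr ε hε D hD hb hns t₁ t₂ ht₁ ht₂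
end

section
/- Let E and F be real inner product spaces and let A : E → F be a continuous linear equivalence (a bounded invertible linear map with bounded inverse). Then for all nonzero vectors u, v ∈ E, sin ∠(A u, A v) ≥ (‖A‖ · ‖A⁻¹‖)⁻¹ · sin ∠(u, v). -/
open InnerProductGeometry RealInnerProductSpace

private lemma sin_aux_nonneg {E : Type*} [NormedAddCommGroup E] [InnerProductSpace ℝ E]
    (u v : E) : 0 ≤ Real.sin (angle u v) :=
  Real.sin_nonneg_of_nonneg_of_le_pi (angle_nonneg u v) (angle_le_pi u v)

/-- For any `t`, `‖u‖ * sin ∠(u,v) ≤ ‖u - t • v‖`. -/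
private lemma sin_aux_le {E : Type*} [NormedAddCommGroup E] [InnerProductSpace ℝ E]
    (u v : E) (hv : v ≠ 0) (t : ℝ) :
    ‖u‖ * Real.sin (angle u v) ≤ ‖u - t • v‖ := by
  have hv2 : (0:ℝ) < ‖v‖ := norm_pos_iff.2 hv
  have hcs := real_inner_mul_inner_self_le u v
  have hs := sin_angle_mul_norm_mul_norm u v
  have ha : 0 ≤ ‖u‖ * Real.sin (angle u v) :=
    mul_nonneg (norm_nonneg u) (sin_aux_nonneg u v)
  have hb : (0:ℝ) ≤ ‖u - t • v‖ := norm_nonneg _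
  have hZ : ⟪v, v⟫ = ‖v‖ ^ 2 := real_inner_self_eq_norm_sq v
  have hX : ⟪u, u⟫ = ‖u‖ ^ 2 := real_inner_self_eq_norm_sq u
  have hbsq : ‖u - t • v‖ ^ 2 = ⟪u, u⟫ - 2 * (t * ⟪u, v⟫) + t ^ 2 * ⟪v, v⟫ := by
    rw [← real_inner_self_eq_norm_sq]
    simp only [inner_sub_left, inner_sub_right, real_inner_smul_left, real_inner_smul_right,
      real_inner_comm v u]
    ring
  have hasq : (‖u‖ * Real.sin (angle u v)) ^ 2 * ‖v‖ ^ 2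
      = ⟪u, u⟫ * ⟪v, v⟫ - ⟪u, v⟫ * ⟪u, v⟫ := by
    have : (Real.sin (angle u v) * (‖u‖ * ‖v‖)) ^ 2
        = ⟪u, u⟫ * ⟪v, v⟫ - ⟪u, v⟫ * ⟪u, v⟫ := by
      rw [hs, Real.sq_sqrt (by nlinarith)]
    nlinarith [this]
  have key : (‖u‖ * Real.sin (angle u v)) ^ 2 ≤ ‖u - t • v‖ ^ 2 := by
    have h1 : (‖u‖ * Real.sin (angle u v)) ^ 2 * ‖v‖ ^ 2 ≤ ‖u - t • v‖ ^ 2 * ‖v‖ ^ 2 := by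
      rw [hasq, hbsq, ← hZ]
      nlinarith [sq_nonneg (t * ⟪v, v⟫ - ⟪u, v⟫), real_inner_self_nonneg (x := v)]
    exact le_of_mul_le_mul_right h1 (by positivity)
  have := Real.sqrt_le_sqrt key
  rwa [Real.sqrt_sq ha, Real.sqrt_sq hb] at this

/-- With `t = ⟪u,v⟫/‖v‖²` we get equality. -/
private lemma sin_aux_eq {E : Type*} [NormedAddCommGroup E] [InnerProductSpace ℝ E]
    (u v : E) (hv : v ≠ 0) :
    ‖u - (⟪u, v⟫ / ‖v‖ ^ 2) • v‖ = ‖u‖ * Real.sin (angle u v) := by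
  have hv2 : (0:ℝ) < ‖v‖ := norm_pos_iff.2 hv
  have hcs := real_inner_mul_inner_self_le u v
  have hs := sin_angle_mul_norm_mul_norm u v
  have ha : 0 ≤ ‖u‖ * Real.sin (angle u v) :=
    mul_nonneg (norm_nonneg u) (sin_aux_nonneg u v)
  have hZ : ⟪v, v⟫ = ‖v‖ ^ 2 := real_inner_self_eq_norm_sq v
  set t : ℝ := ⟪u, v⟫ / ‖v‖ ^ 2 with ht
  have hbsq : ‖u - t • v‖ ^ 2 = ⟪u, u⟫ - 2 * (t * ⟪u, v⟫) + t ^ 2 * ⟪v, v⟫ := by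
    rw [← real_inner_self_eq_norm_sq]
    simp only [inner_sub_left, inner_sub_right, real_inner_smul_left, real_inner_smul_right,
      real_inner_comm v u]
    ring
  have hasq : (‖u‖ * Real.sin (angle u v)) ^ 2 * ‖v‖ ^ 2
      = ⟪u, u⟫ * ⟪v, v⟫ - ⟪u, v⟫ * ⟪u, v⟫ := by
    have : (Real.sin (angle u v) * (‖u‖ * ‖v‖)) ^ 2
        = ⟪u, u⟫ * ⟪v, v⟫ - ⟪u, v⟫ * ⟪u, v⟫ := by
      rw [hs, Real.sq_sqrt (by nlinarith)]
    nlinarith [this]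
  have key : ‖u - t • v‖ ^ 2 = (‖u‖ * Real.sin (angle u v)) ^ 2 := by
    have hZ' : (‖v‖ : ℝ) ^ 2 ≠ 0 := by positivity
    have h1 : ‖u - t • v‖ ^ 2 * ‖v‖ ^ 2 = (‖u‖ * Real.sin (angle u v)) ^ 2 * ‖v‖ ^ 2 := by
      rw [hasq, hbsq, ht, ← hZ]
      field_simp [hZ.symm ▸ hZ']
      ring
    exact mul_right_cancel₀ hZ' h1
  calc ‖u - t • v‖ = Real.sqrt (‖u - t • v‖ ^ 2) := (Real.sqrt_sq (norm_nonneg _)).symm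
    _ = Real.sqrt ((‖u‖ * Real.sin (angle u v)) ^ 2) := by rw [key]
    _ = ‖u‖ * Real.sin (angle u v) := Real.sqrt_sq ha

/-- (Angle distortion under an invertible bounded linear map.) For a
continuous linear equivalence `A : E ≃L F` between real inner product spaces and nonzero
`u, v`, one has `sin ∠(A u, A v) ≥ (‖A‖·‖A⁻¹‖)⁻¹ · sin ∠(u, v)`. -/
theorem stmt_10 {E F : Type*} [NormedAddCommGroup E] [InnerProductSpace ℝ E]
    [NormedAddCommGroup F] [InnerProductSpace ℝ F]
    (A : E ≃L[ℝ] F) (u v : E) (hu : u ≠ 0) (hv : v ≠ 0) :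
    (‖(A : E →L[ℝ] F)‖ * ‖(A.symm : F →L[ℝ] E)‖)⁻¹ *
        Real.sin (InnerProductGeometry.angle u v) ≤
      Real.sin (InnerProductGeometry.angle (A u) (A v)) := by
  have hAu : A u ≠ 0 := fun h => hu (by simpa using congrArg A.symm h)
  have hAv : A v ≠ 0 := fun h => hv (by simpa using congrArg A.symm h)
  have hu' : (0:ℝ) < ‖u‖ := norm_pos_iff.2 hu
  have hAu' : (0:ℝ) < ‖A u‖ := norm_pos_iff.2 hAu
  have hAle : ‖A u‖ ≤ ‖(A : E →L[ℝ] F)‖ * ‖u‖ := (A : E →L[ℝ] F).le_opNorm u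
  have hApos : (0:ℝ) < ‖(A : E →L[ℝ] F)‖ := by
    by_contra h
    push_neg at h
    have : ‖(A : E →L[ℝ] F)‖ = 0 := le_antisymm h (norm_nonneg _)
    nlinarith
  have hsymm : ∀ y : F, ‖A.symm y‖ ≤ ‖(A.symm : F →L[ℝ] E)‖ * ‖y‖ :=
    fun y => (A.symm : F →L[ℝ] E).le_opNorm y
  have hAspos : (0:ℝ) < ‖(A.symm : F →L[ℝ] E)‖ := by
    by_contra h
    push_neg at h
    have h0 : ‖(A.symm : F →L[ℝ] E)‖ = 0 := le_antisymm h (norm_nonneg _)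
    have := hsymm (A u)
    rw [h0, zero_mul] at this
    have : A.symm (A u) = 0 := norm_le_zero_iff.1 this
    exact hu (by simpa using this)
  set S := Real.sin (InnerProductGeometry.angle (A u) (A v)) with hS
  have hSnn : 0 ≤ S := sin_aux_nonneg (A u) (A v)
  set t : ℝ := ⟪A u, A v⟫ / ‖A v‖ ^ 2 with ht
  have hmap : A (u - t • v) = A u - t • A v := by
    rw [map_sub, map_smul]
  have chain : ‖u‖ * Real.sin (angle u v) ≤
      ‖(A.symm : F →L[ℝ] E)‖ * (‖A u‖ * S) := by
    calc ‖u‖ * Real.sin (angle u v) ≤ ‖u - t • v‖ := sin_aux_le u v hv t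
      _ = ‖A.symm (A (u - t • v))‖ := by rw [A.symm_apply_apply]
      _ ≤ ‖(A.symm : F →L[ℝ] E)‖ * ‖A (u - t • v)‖ := hsymm _
      _ = ‖(A.symm : F →L[ℝ] E)‖ * ‖A u - t • A v‖ := by rw [hmap]
      _ = ‖(A.symm : F →L[ℝ] E)‖ * (‖A u‖ * S) := by rw [sin_aux_eq (A u) (A v) hAv]
  have chain2 : ‖u‖ * Real.sin (angle u v) ≤
      ‖(A.symm : F →L[ℝ] E)‖ * (‖(A : E →L[ℝ] F)‖ * ‖u‖ * S) :=
    chain.trans (by nlinarith [mul_le_mul_of_nonneg_right hAle hSnn, norm_nonneg (A.symm : F →L[ℝ] E)])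
  rw [inv_mul_le_iff₀ (by positivity)]
  have := le_of_mul_le_mul_left (a := ‖u‖)
    (by nlinarith [chain2] : ‖u‖ * Real.sin (angle u v) ≤
      ‖u‖ * (‖(A : E →L[ℝ] F)‖ * ‖(A.symm : F →L[ℝ] E)‖ * S)) hu'
  linarith
end

section
/- Let (X, d) be a compact metric space and G : X → X a continuous map. For n ≥ 1 and ε > 0 let r(G, n, ε) denote the minimal cardinality of a set F ⊆ X such that X = ⋃_{z ∈ F} {y ∈ X : d(G^i z, G^i y) < ε for all 0 ≤ i < n}. Let Σ ⊆ X be nonempty, let m ≥ 1, and let a₁ < b₁ ≤ a₂ < b₂ ≤ ⋯ ≤ a_m < b_m be natural numbers; set E := ⋃_{j=1}^m {a_j + 1, …, b_j}. Then there exists a finite set F ⊆ Σ with cardinality at most ∏_{j=1}^m r(G, b_j − a_j, ε/2) such that Σ ⊆ ⋃_{x ∈ F} {y ∈ Σ : d(G^i x, G^i y) ≤ ε for all i ∈ E}. -/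
open Set

/-- `spanningCard G n ε` is the minimal cardinality of an `(n, ε)`-spanning set for `G`:
a set `F` such that every point of the space lies in some `(n, ε, G)`-Bowen ball centered
in `F`. -/
noncomputable def spanningCard {X : Type*} [MetricSpace X] (G : X → X) (n : ℕ) (ε : ℝ) : ℕ :=
  sInf {k | ∃ F : Finset X, F.card = k ∧
    ∀ y : X, ∃ z ∈ F, ∀ i < n, dist (G^[i] z) (G^[i] y) < ε}

/-! Cover each time block `(a_j, b_j]` by a minimal `(b_j - a_j, ε/2)`-spanning set `C_j`,
transported by `G^[a_j + 1]`. The tuples in `∏_j C_j` then index a cover of `X` by sets in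
which any two points stay `ε`-close at all times of `E`, by the triangle inequality through
the common centre. Keeping one point of `Σ` from each such set that meets `Σ` gives the
required centres. -/

section BowenBall

variable {X : Type*} [PseudoMetricSpace X] (G : X → X)

def bowenBall (n : ℕ) (z : X) (ε : ℝ) : Set X :=
  {y | ∀ i < n, dist (G^[i] z) (G^[i] y) < ε}

variable {G}

theorem isOpen_bowenBall (hG : Continuous G) (n : ℕ) (z : X) (ε : ℝ) :
    IsOpen (bowenBall G n z ε) := by
  have : bowenBall G n z ε = ⋂ i ∈ Finset.range n, {y | dist (G^[i] z) (G^[i] y) < ε} := by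
    ext; simp [bowenBall]
  rw [this]
  exact isOpen_biInter_finset fun i _ =>
    isOpen_lt (continuous_const.dist (hG.iterate i)) continuous_const

theorem mem_bowenBall_self (n : ℕ) (z : X) {ε : ℝ} (hε : 0 < ε) : z ∈ bowenBall G n z ε :=
  fun i _ => by simpa using hε

theorem dist_iterate_lt_of_mem_bowenBall {n k i : ℕ} {x y z : X} {ε : ℝ}
    (hx : G^[k] x ∈ bowenBall G n z (ε / 2)) (hy : G^[k] y ∈ bowenBall G n z (ε / 2))
    (hki : k ≤ i) (hin : i < k + n) : dist (G^[i] x) (G^[i] y) < ε := by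
  obtain ⟨l, rfl⟩ := Nat.exists_eq_add_of_le' hki
  have hl : l < n := by omega
  rw [Function.iterate_add_apply, Function.iterate_add_apply]
  calc dist (G^[l] (G^[k] x)) (G^[l] (G^[k] y))
      ≤ dist (G^[l] z) (G^[l] (G^[k] x)) + dist (G^[l] z) (G^[l] (G^[k] y)) :=
        dist_triangle_left _ _ _
    _ < ε / 2 + ε / 2 := add_lt_add (hx l hl) (hy l hl)
    _ = ε := add_halves ε

end BowenBall

theorem exists_card_eq_spanningCard {X : Type*} [MetricSpace X] [CompactSpace X]
    {G : X → X} (hG : Continuous G) (n : ℕ) {ε : ℝ} (hε : 0 < ε) :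
    ∃ F : Finset X, F.card = spanningCard G n ε ∧ ∀ y, ∃ z ∈ F, y ∈ bowenBall G n z ε := by
  obtain ⟨F, hF⟩ := isCompact_univ.elim_finite_subcover (bowenBall G n · ε)
    (fun z => isOpen_bowenBall hG n z ε)
    (fun y _ => mem_iUnion.2 ⟨y, mem_bowenBall_self n y hε⟩)
  have hspanning : ∃ k, ∃ F : Finset X, F.card = k ∧ ∀ y, ∃ z ∈ F, y ∈ bowenBall G n z ε :=
    ⟨F.card, F, rfl, fun y => by simpa using hF (mem_univ y)⟩
  exact Nat.sInf_mem hspanning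

theorem exists_finset_subset_card_le_of_subset_biUnion {α ι : Type*} {S : Set α}
    {K : Finset ι} {A : ι → Set α} (hS : S ⊆ ⋃ k ∈ K, A k) :
    ∃ F : Finset α, ↑F ⊆ S ∧ F.card ≤ K.card ∧
      ∀ y ∈ S, ∃ x ∈ F, ∃ k ∈ K, x ∈ A k ∧ y ∈ A k := by
  classical
  let K' := K.filter fun k => (S ∩ A k).Nonempty
  let pick : K' → α := fun k => (Finset.mem_filter.1 k.2).2.some
  have hpick (k : K') : pick k ∈ S ∩ A k := (Finset.mem_filter.1 k.2).2.some_mem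
  refine ⟨K'.attach.image pick, ?_, ?_, fun y hy => ?_⟩
  · intro x hx
    obtain ⟨k, -, rfl⟩ := Finset.mem_image.1 hx
    exact (hpick k).1
  · calc (K'.attach.image pick).card ≤ K'.attach.card := Finset.card_image_le
      _ = K'.card := Finset.card_attach
      _ ≤ K.card := Finset.card_filter_le _ _
  · obtain ⟨k, hk, hyk⟩ := mem_iUnion₂.1 (hS hy)
    have hk' : k ∈ K' := Finset.mem_filter.2 ⟨hk, y, hy, hyk⟩
    exact ⟨pick ⟨k, hk'⟩, Finset.mem_image_of_mem _ (Finset.mem_attach _ _), k, hk,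
      (hpick ⟨k, hk'⟩).2, hyk⟩

theorem stmt_11_general {X : Type*} [MetricSpace X] [CompactSpace X]
    (G : X → X) (hG : Continuous G) (ε : ℝ) (hε : 0 < ε)
    (S : Set X) (m : ℕ)
    (a b : ℕ → ℕ) :
    ∃ F : Finset X, ↑F ⊆ S ∧
      F.card ≤ ∏ j ∈ Finset.range m, spanningCard G (b j - a j) (ε / 2) ∧
      S ⊆ ⋃ x ∈ F,
        {y ∈ S | ∀ i : ℕ, (∃ j < m, a j < i ∧ i ≤ b j) → dist (G^[i] x) (G^[i] y) ≤ ε} := by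
  choose C hC hCspan using fun j : Fin m =>
    exists_card_eq_spanningCard hG (b j - a j) (half_pos hε)
  let A : (Fin m → X) → Set X := fun z =>
    {y | ∀ j : Fin m, G^[a j + 1] y ∈ bowenBall G (b j - a j) (z j) (ε / 2)}
  have hcover : S ⊆ ⋃ z ∈ Fintype.piFinset C, A z := fun y _ => by
    choose z hzC hz using fun j => hCspan j (G^[a j + 1] y)
    exact mem_iUnion₂.2 ⟨z, Fintype.mem_piFinset.2 hzC, hz⟩
  obtain ⟨F, hFS, hFcard, hF⟩ := exists_finset_subset_card_le_of_subset_biUnion hcover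
  refine ⟨F, hFS, ?_, fun y hy => ?_⟩
  · calc F.card ≤ (Fintype.piFinset C).card := hFcard
      _ = ∏ j : Fin m, spanningCard G (b j - a j) (ε / 2) := by
        simp only [Fintype.card_piFinset, hC]
      _ = _ := Fin.prod_univ_eq_prod_range (fun j => spanningCard G (b j - a j) (ε / 2)) m
  · obtain ⟨x, hxF, z, -, hxz, hyz⟩ := hF y hy
    refine mem_iUnion₂.2 ⟨x, hxF, hy, fun i ⟨j, hj, hai, hib⟩ => ?_⟩
    have hxj : G^[a j + 1] x ∈ bowenBall G (b j - a j) (z ⟨j, hj⟩) (ε / 2) := hxz ⟨j, hj⟩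
    exact (dist_iterate_lt_of_mem_bowenBall hxj (hyz ⟨j, hj⟩) hai (by omega)).le

/-- (Covering a set by red Bowen balls.) Given time blocks
`(a₁, b₁], …, (a_m, b_m]` with `a₁ < b₁ ≤ a₂ < b₂ ≤ ⋯ ≤ a_m < b_m`, any nonempty `Σ ⊆ X`
can be covered by at most `∏_j r(G, b_j − a_j, ε/2)` red Bowen balls
`{y ∈ Σ : d(G^i x, G^i y) ≤ ε for all i ∈ ⋃_j (a_j, b_j]}` with centers `x ∈ Σ`. -/
theorem stmt_11 {X : Type*} [MetricSpace X] [CompactSpace X]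
    (G : X → X) (hG : Continuous G) (ε : ℝ) (hε : 0 < ε)
    (S : Set X) (hS : S.Nonempty) (m : ℕ) (hm : 1 ≤ m)
    (a b : ℕ → ℕ) (hab : ∀ j < m, a j < b j)
    (hchain : ∀ j, j + 1 < m → b j ≤ a (j + 1)) :
    ∃ F : Finset X, ↑F ⊆ S ∧
      F.card ≤ ∏ j ∈ Finset.range m, spanningCard G (b j - a j) (ε / 2) ∧
      S ⊆ ⋃ x ∈ F,
        {y ∈ S | ∀ i : ℕ, (∃ j < m, a j < i ∧ i ≤ b j) → dist (G^[i] x) (G^[i] y) ≤ ε} :=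
  stmt_11_general G hG ε hε S m a b
end
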